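/- arXiv:1705.02473 — 2 statements merged into one kernel-verified Lean document; each statement's English description precedes it below -/
import Mathlib

section
/- The partial derivative of the call price C with respect to the volatility σ (the Vega) equals (α/σ²)e^{rt}(Φ(d_{t,2}^α) - Φ(d_{t,1}^α)) + (e^{-(d_{t,1}^α)²/2}/√(2π))·(s + (α/σ)e^{rt})·√(T-t). -/
/-!
Since `d₂ = d₁ - σ√(T-t)` and `d₁ σ√(T-t) = log(A/B) + σ²(T-t)/2`, where `A = s + (α/σ)e^{rt}`
and `B = Ke^{-r(T-t)} + (α/σ)e^{rt}`, the Gaussian densities satisfy `B φ(d₂) = A φ(d₁)`.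
As in Black–Scholes, the terms carrying `∂d₁/∂σ` therefore cancel; what survives is the common
derivative `-(α/σ²)e^{rt}` of `A` and `B` times `Φ(d₁) - Φ(d₂)`, plus `A φ(d₁) √(T-t)`.
-/

open Real

/-- Standard normal CDF. -/
noncomputable def Phi (d : ℝ) : ℝ :=
  ∫ u in Set.Iic d, Real.exp (-u ^ 2 / 2) / Real.sqrt (2 * Real.pi)

/-- d_{t,1}^α of the crisis model. -/
noncomputable def d1 (s K σ α r t T : ℝ) : ℝ :=
  (Real.log ((s + α / σ * Real.exp (r * t)) / (K + α / σ * Real.exp (r * T)))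
    + (r + σ ^ 2 / 2) * (T - t)) / (σ * Real.sqrt (T - t))

/-- d_{t,2}^α of the crisis model. -/
noncomputable def d2 (s K σ α r t T : ℝ) : ℝ :=
  d1 s K σ α r t T - σ * Real.sqrt (T - t)

/-- Crisis-model European call price. -/
noncomputable def C (s K σ α r t T : ℝ) : ℝ :=
  (s + α / σ * Real.exp (r * t)) * Phi (d1 s K σ α r t T)
    - (K * Real.exp (-r * (T - t)) + α / σ * Real.exp (r * t)) * Phi (d2 s K σ α r t T)

open MeasureTheory ProbabilityTheory Set

noncomputable def stdNormalPDF (u : ℝ) : ℝ := exp (-u ^ 2 / 2) / √(2 * π)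

theorem stdNormalPDF_eq_gaussianPDFReal : stdNormalPDF = gaussianPDFReal 0 1 := by
  ext u
  simp [stdNormalPDF, gaussianPDFReal, div_eq_inv_mul]

theorem continuous_stdNormalPDF : Continuous stdNormalPDF := by
  unfold stdNormalPDF
  fun_prop

theorem integrable_stdNormalPDF : Integrable stdNormalPDF := by
  rw [stdNormalPDF_eq_gaussianPDFReal]
  exact integrable_gaussianPDFReal 0 1

theorem hasDerivAt_integral_Iic {f : ℝ → ℝ} (hf : Continuous f) (hfi : Integrable f) (x : ℝ) :
    HasDerivAt (fun y => ∫ u in Iic y, f u) (f x) x := by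
  have hsplit : (fun y => ∫ u in Iic y, f u) = fun y => (∫ u in Iic 0, f u) + ∫ u in 0..y, f u := by
    ext y
    rw [← intervalIntegral.integral_Iic_sub_Iic hfi.integrableOn hfi.integrableOn]
    ring
  rw [hsplit]
  exact (hf.integral_hasStrictDerivAt 0 x).hasDerivAt.const_add _

theorem hasDerivAt_Phi (x : ℝ) : HasDerivAt Phi (stdNormalPDF x) x :=
  hasDerivAt_integral_Iic continuous_stdNormalPDF integrable_stdNormalPDF x

theorem mul_stdNormalPDF_sub_eq {a b d w : ℝ} (ha : 0 < a) (hb : 0 < b)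
    (hd : d * w = log (a / b) + w ^ 2 / 2) :
    b * stdNormalPDF (d - w) = a * stdNormalPDF d := by
  have hexp : exp (-(d - w) ^ 2 / 2) = exp (-d ^ 2 / 2) * (a / b) := by
    rw [← exp_log (div_pos ha hb), ← exp_add]
    congr 1
    linear_combination hd
  unfold stdNormalPDF
  rw [hexp]
  field_simp

theorem hasDerivAt_mul_Phi_sub_mul_Phi {A B d e : ℝ → ℝ} {A' e' x : ℝ}
    (hA : HasDerivAt A A' x) (hB : HasDerivAt B A' x) (hd : DifferentiableAt ℝ d x)
    (he : HasDerivAt e e' x)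
    (hdens : B x * stdNormalPDF (d x - e x) = A x * stdNormalPDF (d x)) :
    HasDerivAt (fun v => A v * Phi (d v) - B v * Phi (d v - e v))
      (A' * (Phi (d x) - Phi (d x - e x)) + A x * stdNormalPDF (d x) * e') x := by
  obtain ⟨d', hd'⟩ : ∃ d', HasDerivAt d d' x := ⟨_, hd.hasDerivAt⟩
  have hC := (hA.mul ((hasDerivAt_Phi _).comp x hd')).sub
    (hB.mul ((hasDerivAt_Phi _).comp x (hd'.sub he)))
  refine hC.congr_deriv ?_
  simp only [Function.comp_apply, Pi.sub_apply]
  linear_combination (e' - d') * hdens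

theorem hasDerivAt_const_add_div_mul (c a b : ℝ) {x : ℝ} (hx : x ≠ 0) :
    HasDerivAt (fun v => c + a / v * b) (-(a / x ^ 2) * b) x := by
  have h := ((hasDerivAt_inv hx).const_mul a).mul_const b
  simp only [← div_eq_mul_inv] at h
  exact (h.const_add c).congr_deriv (by ring)

section Crisis

variable {s K σ α r t T : ℝ}

theorem discounted_strike_eq :
    K * exp (-r * (T - t)) + α / σ * exp (r * t)
      = (K + α / σ * exp (r * T)) * exp (-r * (T - t)) := by
  rw [add_mul, mul_assoc, ← exp_add, show r * T + -r * (T - t) = r * t by ring]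

theorem d1_mul_eq (hσ : σ ≠ 0) (htT : t < T) (h1 : 0 < s + α / σ * exp (r * t))
    (h2 : 0 < K + α / σ * exp (r * T)) :
    d1 s K σ α r t T * (σ * √(T - t))
      = log ((s + α / σ * exp (r * t)) / (K * exp (-r * (T - t)) + α / σ * exp (r * t)))
        + (σ * √(T - t)) ^ 2 / 2 := by
  have hw : σ * √(T - t) ≠ 0 := mul_ne_zero hσ (sqrt_pos.mpr (sub_pos.mpr htT)).ne'
  have hB := mul_pos h2 (exp_pos (-r * (T - t)))
  rw [d1, div_mul_cancel₀ _ hw, discounted_strike_eq, log_div h1.ne' hB.ne',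
    log_mul h2.ne' (exp_ne_zero _), log_exp, log_div h1.ne' h2.ne', mul_pow,
    sq_sqrt (sub_pos.mpr htT).le]
  ring

theorem differentiableAt_d1 (hσ : σ ≠ 0) (htT : t < T) (h1 : s + α / σ * exp (r * t) ≠ 0)
    (h2 : K + α / σ * exp (r * T) ≠ 0) :
    DifferentiableAt ℝ (fun v => d1 s K v α r t T) σ := by
  have hw : σ * √(T - t) ≠ 0 := mul_ne_zero hσ (sqrt_pos.mpr (sub_pos.mpr htT)).ne'
  have hq := div_ne_zero h1 h2
  unfold d1
  fun_prop (disch := assumption)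

end Crisis

theorem crisis_vega_general (s K σ α r t T : ℝ)
    (hσ : 0 < σ)
    (htT : t < T)
    (h1 : 0 < s + α / σ * Real.exp (r * t))
    (h2 : 0 < K + α / σ * Real.exp (r * T)) :
    HasDerivAt (fun v => C s K v α r t T)
      (α / σ ^ 2 * Real.exp (r * t) * (Phi (d2 s K σ α r t T) - Phi (d1 s K σ α r t T))
        + Real.exp (-(d1 s K σ α r t T) ^ 2 / 2) / Real.sqrt (2 * Real.pi) *
          (s + α / σ * Real.exp (r * t)) * Real.sqrt (T - t)) σ := by
  have hB : 0 < K * exp (-r * (T - t)) + α / σ * exp (r * t) := by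
    rw [discounted_strike_eq]
    positivity
  have hdens := mul_stdNormalPDF_sub_eq h1 hB (d1_mul_eq hσ.ne' htT h1 h2)
  have hC := hasDerivAt_mul_Phi_sub_mul_Phi
    (hasDerivAt_const_add_div_mul s α (exp (r * t)) hσ.ne')
    (hasDerivAt_const_add_div_mul (K * exp (-r * (T - t))) α (exp (r * t)) hσ.ne')
    (differentiableAt_d1 hσ.ne' htT h1.ne' h2.ne') ((hasDerivAt_id σ).mul_const √(T - t)) hdens
  refine hC.congr_deriv ?_
  simp only [d2, stdNormalPDF, id]
  ring

/-- Vega of the crisis-model call. -/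
theorem crisis_vega (s K σ α r t T : ℝ)
    (hs : 0 < s) (hK : 0 < K) (hσ : 0 < σ) (hα : 0 ≤ α)
    (ht : 0 ≤ t) (htT : t < T)
    (h1 : 0 < s + α / σ * Real.exp (r * t))
    (h2 : 0 < K + α / σ * Real.exp (r * T)) :
    HasDerivAt (fun v => C s K v α r t T)
      (α / σ ^ 2 * Real.exp (r * t) * (Phi (d2 s K σ α r t T) - Phi (d1 s K σ α r t T))
        + Real.exp (-(d1 s K σ α r t T) ^ 2 / 2) / Real.sqrt (2 * Real.pi) *
          (s + α / σ * Real.exp (r * t)) * Real.sqrt (T - t)) σ :=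
  crisis_vega_general s K σ α r t T hσ htT h1 h2
end

section
/- The partial derivative of Φ(d_{t,2}^α) with respect to the asset price s equals Γ·(s + (α/σ)e^{rt})/(Ke^{-rτ} + (α/σ)e^{rt}), where Γ = e^{-(d_{t,1}^α)²/2}/((s + (α/σ)e^{rt})σ√(2πτ)) is the Gamma and τ = T - t. -/
open Real

/-!
Since `d₂` depends on `s` only through `log (s + (α/σ)e^{rt})`, the chain rule gives
`∂Φ(d₂)/∂s = φ(d₂) / ((s + (α/σ)e^{rt}) σ √τ)`. Expanding the square in
`d₂ = d₁ - σ√τ` and using `d₁ σ√τ = log ((s + (α/σ)e^{rt}) / (K + (α/σ)e^{rT})) + (r + σ²/2)τ`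
turns `φ(d₂)` into `φ(d₁) (s + (α/σ)e^{rt}) / (K e^{-rτ} + (α/σ)e^{rt})`.
-/

open MeasureTheory

theorem hasDerivAt_integral_Iic_s10 {E : Type*} [NormedAddCommGroup E] [NormedSpace ℝ E]
    [CompleteSpace E] {f : ℝ → E} (hf : Integrable f) {x : ℝ} (hfx : ContinuousAt f x) :
    HasDerivAt (fun y => ∫ u in Set.Iic y, f u) (f x) x := by
  have h_split : ∀ y, ∫ u in Set.Iic y, f u = (∫ u in Set.Iic 0, f u) + ∫ u in (0 : ℝ)..y, f u :=
    fun y => by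
      rw [← intervalIntegral.integral_Iic_sub_Iic hf.integrableOn hf.integrableOn, add_sub_cancel]
  exact ((intervalIntegral.integral_hasDerivAt_right hf.intervalIntegrable
    hf.aestronglyMeasurable.stronglyMeasurableAtFilter hfx).const_add _).congr_of_eventuallyEq
    (.of_forall h_split)

theorem integrable_stdGaussian :
    Integrable fun u : ℝ => Real.exp (-u ^ 2 / 2) / Real.sqrt (2 * Real.pi) := by
  convert (integrable_exp_neg_mul_sq (by norm_num : (0 : ℝ) < 1 / 2)).div_const
    (Real.sqrt (2 * Real.pi)) using 2 with u
  ring_nf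

theorem hasDerivAt_Phi_s10 (x : ℝ) :
    HasDerivAt Phi (Real.exp (-x ^ 2 / 2) / Real.sqrt (2 * Real.pi)) x :=
  hasDerivAt_integral_Iic_s10 integrable_stdGaussian (by fun_prop)

section CrisisModel

variable {s K σ α r t T : ℝ}

theorem hasDerivAt_d1 (h1 : s + α / σ * Real.exp (r * t) ≠ 0)
    (h2 : K + α / σ * Real.exp (r * T) ≠ 0) :
    HasDerivAt (fun x => d1 x K σ α r t T)
      (1 / ((s + α / σ * Real.exp (r * t)) * (σ * Real.sqrt (T - t)))) s := by
  have h_quot : HasDerivAt (fun x => (x + α / σ * Real.exp (r * t)) / (K + α / σ * Real.exp (r * T)))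
      (1 / (K + α / σ * Real.exp (r * T))) s := by
    simpa using ((hasDerivAt_id s).add_const _).div_const _
  exact (((h_quot.log (div_ne_zero h1 h2)).add_const ((r + σ ^ 2 / 2) * (T - t))).div_const
    (σ * Real.sqrt (T - t))).congr_deriv (by rw [div_div_div_cancel_right₀ h2, div_div])

theorem hasDerivAt_d2 (h1 : s + α / σ * Real.exp (r * t) ≠ 0)
    (h2 : K + α / σ * Real.exp (r * T) ≠ 0) :
    HasDerivAt (fun x => d2 x K σ α r t T)
      (1 / ((s + α / σ * Real.exp (r * t)) * (σ * Real.sqrt (T - t)))) s :=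
  (hasDerivAt_d1 h1 h2).sub_const _

theorem d1_sq_sub_d2_sq (hσ : σ ≠ 0) (htT : t < T) :
    d1 s K σ α r t T ^ 2 - d2 s K σ α r t T ^ 2 =
      2 * (Real.log ((s + α / σ * Real.exp (r * t)) / (K + α / σ * Real.exp (r * T)))
        + r * (T - t)) := by
  have hτ : Real.sqrt (T - t) ^ 2 = T - t := Real.sq_sqrt (sub_pos.mpr htT).le
  have hd1 : d1 s K σ α r t T * (σ * Real.sqrt (T - t)) =
      Real.log ((s + α / σ * Real.exp (r * t)) / (K + α / σ * Real.exp (r * T)))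
        + (r + σ ^ 2 / 2) * (T - t) :=
    div_mul_cancel₀ _ (mul_ne_zero hσ (Real.sqrt_pos.mpr (sub_pos.mpr htT)).ne')
  rw [d2]
  linear_combination 2 * hd1 - σ ^ 2 * hτ

theorem discounted_strike_add :
    K * Real.exp (-r * (T - t)) + α / σ * Real.exp (r * t) =
      (K + α / σ * Real.exp (r * T)) / Real.exp (r * (T - t)) := by
  rw [eq_div_iff (Real.exp_pos _).ne', add_mul, mul_assoc, mul_assoc, ← Real.exp_add,
    ← Real.exp_add]
  ring_nf
  rw [Real.exp_zero, mul_one]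

theorem exp_neg_d2_sq (hσ : σ ≠ 0) (htT : t < T) (h1 : 0 < s + α / σ * Real.exp (r * t))
    (h2 : 0 < K + α / σ * Real.exp (r * T)) :
    Real.exp (-d2 s K σ α r t T ^ 2 / 2) =
      Real.exp (-d1 s K σ α r t T ^ 2 / 2) * (s + α / σ * Real.exp (r * t)) /
        (K * Real.exp (-r * (T - t)) + α / σ * Real.exp (r * t)) := by
  have h_exponent : -d2 s K σ α r t T ^ 2 / 2 = -d1 s K σ α r t T ^ 2 / 2 +
      (Real.log ((s + α / σ * Real.exp (r * t)) / (K + α / σ * Real.exp (r * T)))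
        + r * (T - t)) := by
    linear_combination (d1_sq_sub_d2_sq (s := s) (K := K) (α := α) (r := r) hσ htT) / 2
  rw [h_exponent, Real.exp_add, Real.exp_add, Real.exp_log (div_pos h1 h2),
    discounted_strike_add]
  field_simp

end CrisisModel

theorem dPhi_d2_ds_general (s K σ α r t T : ℝ)
    (hσ : 0 < σ)
    (htT : t < T)
    (h1 : 0 < s + α / σ * Real.exp (r * t))
    (h2 : 0 < K + α / σ * Real.exp (r * T)) :
    HasDerivAt (fun x => Phi (d2 x K σ α r t T))
      (Real.exp (-(d1 s K σ α r t T) ^ 2 / 2) /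
          ((s + α / σ * Real.exp (r * t)) * σ * Real.sqrt (2 * Real.pi * (T - t))) *
        (s + α / σ * Real.exp (r * t)) /
        (K * Real.exp (-r * (T - t)) + α / σ * Real.exp (r * t))) s := by
  have h_chain := (hasDerivAt_Phi_s10 _).comp s (hasDerivAt_d2 (K := K) (r := r) h1.ne' h2.ne')
  refine h_chain.congr_deriv ?_
  rw [exp_neg_d2_sq hσ.ne' htT h1 h2, Real.sqrt_mul (by positivity : (0 : ℝ) ≤ 2 * Real.pi) (T - t)]
  field_simp

/-- ∂Φ(d₂)/∂s = Γ·(s + (α/σ)e^{rt})/(Ke^{-rτ} + (α/σ)e^{rt}). -/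
theorem dPhi_d2_ds (s K σ α r t T : ℝ)
    (hs : 0 < s) (hK : 0 < K) (hσ : 0 < σ) (hα : 0 ≤ α)
    (ht : 0 ≤ t) (htT : t < T)
    (h1 : 0 < s + α / σ * Real.exp (r * t))
    (h2 : 0 < K + α / σ * Real.exp (r * T)) :
    HasDerivAt (fun x => Phi (d2 x K σ α r t T))
      (Real.exp (-(d1 s K σ α r t T) ^ 2 / 2) /
          ((s + α / σ * Real.exp (r * t)) * σ * Real.sqrt (2 * Real.pi * (T - t))) *
        (s + α / σ * Real.exp (r * t)) /
        (K * Real.exp (-r * (T - t)) + α / σ * Real.exp (r * t))) s :=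
  dPhi_d2_ds_general s K σ α r t T hσ htT h1 h2
end
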